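/- Let A be a finite abelian group, G a finite group, α : G → Aut(A) an action, and K = A ⋊_α G. For every class function f : G → ℂ, Res_G^K(Ind_G^K f) = f · Res_G^K(Ind_G^K 1), where 1 denotes the constant function 1 on G and the product is pointwise on G. (This is the group case of admissibility condition (2) of Definition 3.3 for the pair (K, G), as established in Theorem 4.7.) -/
import Mathlib


namespace Stmt13

open scoped Classical in
/-- The function induced from a subgroup `H` of a finite group `K`:
`(Ind_H^K f)(k) = (1/|H|) · Σ_{t ∈ K, t k t⁻¹ ∈ H} f (t k t⁻¹)`. -/
noncomputable def ind {K : Type*} [Group K] [Fintype K] (H : Subgroup K) (f : K → ℂ) :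
    K → ℂ :=
  fun k => (1 / (Nat.card H : ℂ)) * ∑ t : K, if t * k * t⁻¹ ∈ H then f (t * k * t⁻¹) else 0

instance {A G : Type*} [Group A] [Fintype A] [Group G] [Fintype G] {α : G →* MulAut A} :
    Fintype (A ⋊[α] G) :=
  Fintype.ofEquiv (A × G)
    { toFun := fun p => ⟨p.1, p.2⟩
      invFun := fun x => (x.left, x.right)
      left_inv := fun _ => rfl
      right_inv := fun _ => rfl }

/-- Admissibility condition (2) of Definition 3.3, group case (Theorem 4.7):
`Res_G^K (Ind_G^K f) = f · Res_G^K (Ind_G^K 1)` for any class function `f` on `G`,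
where `K = A ⋊[α] G`. Restriction to `G` means evaluation at `(1, g)`. -/
theorem res_ind_eq_mul_res_ind_one {A G : Type*} [CommGroup A] [Fintype A]
    [Group G] [Fintype G]
    (α : G →* MulAut A) (f : G → ℂ) (hf : ∀ s t : G, f (s * t * s⁻¹) = f t) :
    ∀ g : G,
      ind (SemidirectProduct.inr : G →* A ⋊[α] G).range (fun x => f x.right) ⟨1, g⟩
        = f g * ind (SemidirectProduct.inr : G →* A ⋊[α] G).range (fun _ => (1 : ℂ)) ⟨1, g⟩ := by
  intro g
  classical
  unfold ind
  beta_reduce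
  rw [mul_left_comm]
  congr 1
  rw [Finset.mul_sum]
  apply Finset.sum_congr rfl
  intro t _
  have hr : (t * (⟨1, g⟩ : A ⋊[α] G) * t⁻¹).right = t.right * g * t.right⁻¹ := by
    simp
  split_ifs with h
  · rw [hr, hf, mul_one]
  · ring

end Stmt13
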